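/- Let F ∈ ℤ[X], ζ = exp(2πi/15) ∈ ℂ, and let k be an integer with gcd(k, 15) = 1. If F(ζ) is good then F(ζ^k) is good, and if F(ζ) is bad then F(ζ^k) is bad. -/

import Mathlib

open Polynomial

/-- The primitive 15th root of unity `exp(2πi/15)`. -/
noncomputable def zeta15 : ℂ := Complex.exp (2 * ↑Real.pi * Complex.I / 15)

/-- `Φ₃` evaluated at `zeta15`. -/
noncomputable def phi3z : ℂ := zeta15 ^ 2 + zeta15 + 1

/-- `Φ₅` evaluated at `zeta15`. -/
noncomputable def phi5z : ℂ := zeta15 ^ 4 + zeta15 ^ 3 + zeta15 ^ 2 + zeta15 + 1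

/-- A complex number is *good* if it has a unit-times-good-form representation. -/
noncomputable def IsGood (α : ℂ) : Prop :=
  ∃ (u v g : Polynomial ℤ) (j : ℕ) (ε : ℤ), j < 15 ∧ (ε = 1 ∨ ε = -1) ∧
    Polynomial.aeval zeta15 u * Polynomial.aeval zeta15 v = 1 ∧
    α = Polynomial.aeval zeta15 u *
      ((zeta15 ^ 5 - 1) + (ε : ℂ) * zeta15 ^ j * phi3z
        + (zeta15 - 1) * phi3z * phi5z * Polynomial.aeval zeta15 g)

/-- A complex number is *bad* if it has a unit-times-bad-form representation. -/
noncomputable def IsBad (α : ℂ) : Prop :=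
  ∃ (u v g : Polynomial ℤ) (j : ℕ) (ε : ℤ), j < 15 ∧ (ε = 1 ∨ ε = -1) ∧
    Polynomial.aeval zeta15 u * Polynomial.aeval zeta15 v = 1 ∧
    α = Polynomial.aeval zeta15 u *
      ((zeta15 ^ 5 - 1) + (ε : ℂ) * zeta15 ^ j * phi3z * (zeta15 - 1)
        + (zeta15 - 1) * phi3z * phi5z * Polynomial.aeval zeta15 g)

lemma zeta15_prim : IsPrimitiveRoot zeta15 15 := by
  have h := Complex.isPrimitiveRoot_exp 15 (by norm_num)
  simpa [zeta15] using h

lemma zeta15_pow15 : zeta15 ^ 15 = 1 := zeta15_prim.pow_eq_one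

lemma hphi15 : zeta15^8 - zeta15^7 + zeta15^5 - zeta15^4 + zeta15^3 - zeta15 + 1 = 0 := by
  have h3 : zeta15 ^ 3 - 1 ≠ 0 :=
    sub_ne_zero.mpr (zeta15_prim.pow_ne_one_of_pos_of_lt (by norm_num) (by norm_num))
  have h5 : zeta15 ^ 5 - 1 ≠ 0 :=
    sub_ne_zero.mpr (zeta15_prim.pow_ne_one_of_pos_of_lt (by norm_num) (by norm_num))
  have key : (zeta15 ^ 3 - 1) * (zeta15 ^ 5 - 1) *
      (zeta15^8 - zeta15^7 + zeta15^5 - zeta15^4 + zeta15^3 - zeta15 + 1)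
      = (zeta15 - 1) * (zeta15 ^ 15 - 1) := by ring
  rw [zeta15_pow15, sub_self, mul_zero] at key
  rcases mul_eq_zero.mp key with h | h
  · exact absurd (mul_eq_zero.mp h) (by tauto)
  · exact h

lemma pow_mod15 (n : ℕ) : zeta15 ^ (n % 15) = zeta15 ^ n := by
  conv_rhs => rw [← Nat.div_add_mod n 15]
  rw [pow_add, pow_mul, zeta15_pow15, one_pow, one_mul]

lemma transfer15 {p : Polynomial ℤ} (hp : aeval zeta15 p = 0) {m : ℕ}
    (hm : Nat.Coprime m 15) : aeval (zeta15 ^ m) p = 0 := by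
  have hdvd : minpoly ℤ zeta15 ∣ p :=
    minpoly.isIntegrallyClosed_dvd (zeta15_prim.isIntegral (by norm_num)) hp
  rw [← Polynomial.cyclotomic_eq_minpoly zeta15_prim (by norm_num)] at hdvd
  obtain ⟨q, hq⟩ := hdvd
  have prim' : IsPrimitiveRoot (zeta15 ^ m) 15 := zeta15_prim.pow_of_coprime m hm
  have hz : aeval (zeta15 ^ m) (cyclotomic 15 ℤ) = 0 := by
    simpa [aeval_def, eval₂_eq_eval_map, IsRoot.def] using prim'.isRoot_cyclotomic
      (by norm_num : (0:ℕ) < 15)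
  rw [hq, map_mul, hz, zero_mul]

lemma good_transfer (m : ℕ) (hm : Nat.Coprime m 15) (cp ci e1 e2 w : Polynomial ℤ)
    (Hc : aeval zeta15 cp * aeval zeta15 ci = 1)
    (H1 : (zeta15^m)^5 - 1
      = aeval zeta15 cp * ((zeta15^5 - 1) + (zeta15-1)*phi3z*phi5z * aeval zeta15 e1))
    (H2 : (zeta15^m)^2 + zeta15^m + 1
      = aeval zeta15 cp * (phi3z + (zeta15-1)*phi3z*phi5z * aeval zeta15 e2))
    (H3 : (zeta15^m - 1) * ((zeta15^m)^2 + zeta15^m + 1)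
        * ((zeta15^m)^4 + (zeta15^m)^3 + (zeta15^m)^2 + zeta15^m + 1)
      = aeval zeta15 cp * ((zeta15-1)*phi3z*phi5z) * aeval zeta15 w)
    {F : Polynomial ℤ} (h : IsGood (aeval zeta15 F)) : IsGood (aeval (zeta15^m) F) := by
  obtain ⟨u, v, g, j, ε, hj, hε, huv, hα⟩ := h
  set P : Polynomial ℤ := u * ((X^5 - 1) + C ε * X^j * (X^2+X+1)
    + (X-1)*((X^2+X+1)*((X^4+X^3+X^2+X+1)*g))) with hP
  have hev : ∀ (t : ℂ), aeval t P = aeval t u * ((t^5 - 1) + (ε:ℂ)*t^j*(t^2+t+1)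
      + (t-1)*(t^2+t+1)*(t^4+t^3+t^2+t+1)*aeval t g) := by
    intro t
    simp only [hP, map_mul, map_add, map_sub, map_pow, map_one, aeval_X, aeval_C,
      algebraMap_int_eq, eq_intCast, map_intCast]
    ring
  have hFP : aeval zeta15 (F - P) = 0 := by
    rw [map_sub, sub_eq_zero, hα, hev]
    simp only [phi3z, phi5z]
  have h2 : aeval (zeta15^m) F = aeval (zeta15^m) P := by
    have := transfer15 hFP hm
    rwa [map_sub, sub_eq_zero] at this
  have hcomp : ∀ p : Polynomial ℤ, aeval zeta15 (p.comp (X^m)) = aeval (zeta15^m) p := by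
    intro p; rw [aeval_comp]; simp
  have huv' : aeval (zeta15^m) u * aeval (zeta15^m) v = 1 := by
    have h0 : aeval zeta15 (u*v - 1) = 0 := by
      rw [map_sub, map_mul, huv, map_one, sub_self]
    have := transfer15 h0 hm
    rwa [map_sub, map_mul, map_one, sub_eq_zero] at this
  refine ⟨u.comp (X^m) * cp, v.comp (X^m) * ci,
    e1 + C ε * X^(m*j) * e2 + w * g.comp (X^m), (m*j) % 15, ε,
    Nat.mod_lt _ (by norm_num), hε, ?_, ?_⟩
  · rw [map_mul, map_mul, hcomp, hcomp]
    calc aeval (zeta15^m) u * aeval zeta15 cp * (aeval (zeta15^m) v * aeval zeta15 ci)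
        = aeval (zeta15^m) u * aeval (zeta15^m) v * (aeval zeta15 cp * aeval zeta15 ci) := by
          ring
      _ = 1 := by rw [huv', Hc, mul_one]
  · have hg' : aeval zeta15 (e1 + C ε * X^(m*j) * e2 + w * g.comp (X^m))
        = aeval zeta15 e1 + (ε:ℂ) * zeta15^(m*j) * aeval zeta15 e2
          + aeval zeta15 w * aeval (zeta15^m) g := by
      simp [hcomp]
    have hu' : aeval zeta15 (u.comp (X^m) * cp) = aeval (zeta15^m) u * aeval zeta15 cp := by
      rw [map_mul, hcomp]
    rw [h2, hev (zeta15^m), hu', hg', pow_mod15, ← pow_mul]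
    linear_combination aeval (zeta15^m) u * H1
      + aeval (zeta15^m) u * (ε:ℂ) * (zeta15^m)^j * H2
      + aeval (zeta15^m) u * aeval (zeta15^m) g * H3

lemma bad_transfer (m : ℕ) (hm : Nat.Coprime m 15) (cp ci e1 e2 w : Polynomial ℤ)
    (Hc : aeval zeta15 cp * aeval zeta15 ci = 1)
    (H1 : (zeta15^m)^5 - 1
      = aeval zeta15 cp * ((zeta15^5 - 1) + (zeta15-1)*phi3z*phi5z * aeval zeta15 e1))
    (H2 : (zeta15^m - 1) * ((zeta15^m)^2 + zeta15^m + 1)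
      = aeval zeta15 cp * ((zeta15-1)*phi3z + (zeta15-1)*phi3z*phi5z * aeval zeta15 e2))
    (H3 : (zeta15^m - 1) * ((zeta15^m)^2 + zeta15^m + 1)
        * ((zeta15^m)^4 + (zeta15^m)^3 + (zeta15^m)^2 + zeta15^m + 1)
      = aeval zeta15 cp * ((zeta15-1)*phi3z*phi5z) * aeval zeta15 w)
    {F : Polynomial ℤ} (h : IsBad (aeval zeta15 F)) : IsBad (aeval (zeta15^m) F) := by
  obtain ⟨u, v, g, j, ε, hj, hε, huv, hα⟩ := h
  set P : Polynomial ℤ := u * ((X^5 - 1) + C ε * X^j * (X^2+X+1) * (X-1)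
    + (X-1)*((X^2+X+1)*((X^4+X^3+X^2+X+1)*g))) with hP
  have hev : ∀ (t : ℂ), aeval t P = aeval t u * ((t^5 - 1) + (ε:ℂ)*t^j*(t^2+t+1)*(t-1)
      + (t-1)*(t^2+t+1)*(t^4+t^3+t^2+t+1)*aeval t g) := by
    intro t
    simp only [hP, map_mul, map_add, map_sub, map_pow, map_one, aeval_X, aeval_C,
      algebraMap_int_eq, eq_intCast, map_intCast]
    ring
  have hFP : aeval zeta15 (F - P) = 0 := by
    rw [map_sub, sub_eq_zero, hα, hev]
    simp only [phi3z, phi5z]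
  have h2 : aeval (zeta15^m) F = aeval (zeta15^m) P := by
    have := transfer15 hFP hm
    rwa [map_sub, sub_eq_zero] at this
  have hcomp : ∀ p : Polynomial ℤ, aeval zeta15 (p.comp (X^m)) = aeval (zeta15^m) p := by
    intro p; rw [aeval_comp]; simp
  have huv' : aeval (zeta15^m) u * aeval (zeta15^m) v = 1 := by
    have h0 : aeval zeta15 (u*v - 1) = 0 := by
      rw [map_sub, map_mul, huv, map_one, sub_self]
    have := transfer15 h0 hm
    rwa [map_sub, map_mul, map_one, sub_eq_zero] at this
  refine ⟨u.comp (X^m) * cp, v.comp (X^m) * ci,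
    e1 + C ε * X^(m*j) * e2 + w * g.comp (X^m), (m*j) % 15, ε,
    Nat.mod_lt _ (by norm_num), hε, ?_, ?_⟩
  · rw [map_mul, map_mul, hcomp, hcomp]
    calc aeval (zeta15^m) u * aeval zeta15 cp * (aeval (zeta15^m) v * aeval zeta15 ci)
        = aeval (zeta15^m) u * aeval (zeta15^m) v * (aeval zeta15 cp * aeval zeta15 ci) := by
          ring
      _ = 1 := by rw [huv', Hc, mul_one]
  · have hg' : aeval zeta15 (e1 + C ε * X^(m*j) * e2 + w * g.comp (X^m))
        = aeval zeta15 e1 + (ε:ℂ) * zeta15^(m*j) * aeval zeta15 e2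
          + aeval zeta15 w * aeval (zeta15^m) g := by
      simp [hcomp]
    have hu' : aeval zeta15 (u.comp (X^m) * cp) = aeval (zeta15^m) u * aeval zeta15 cp := by
      rw [map_mul, hcomp]
    rw [h2, hev (zeta15^m), hu', hg', pow_mod15, ← pow_mul]
    linear_combination aeval (zeta15^m) u * H1
      + aeval (zeta15^m) u * (ε:ℂ) * (zeta15^m)^j * H2
      + aeval (zeta15^m) u * aeval (zeta15^m) g * H3

lemma good_1 {F : Polynomial ℤ} (h : IsGood (aeval zeta15 F)) : IsGood (aeval (zeta15^1) F) := by
  apply good_transfer 1 (by norm_num) ((1) : Polynomial ℤ) ((1) : Polynomial ℤ) (0 : Polynomial ℤ) (0 : Polynomial ℤ) ((1) : Polynomial ℤ) ?_ ?_ ?_ ?_ h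
  · simp only [map_mul, map_add, map_sub, map_pow, map_one, map_zero, map_ofNat, aeval_X, map_neg, phi3z, phi5z]
    linear_combination ((0 : ℂ)) * hphi15
  · simp only [map_mul, map_add, map_sub, map_pow, map_one, map_zero, map_ofNat, aeval_X, map_neg, phi3z, phi5z]
    linear_combination ((0 : ℂ)) * hphi15
  · simp only [map_mul, map_add, map_sub, map_pow, map_one, map_zero, map_ofNat, aeval_X, map_neg, phi3z, phi5z]
    linear_combination ((0 : ℂ)) * hphi15
  · simp only [map_mul, map_add, map_sub, map_pow, map_one, map_zero, map_ofNat, aeval_X, map_neg, phi3z, phi5z]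
    linear_combination ((0 : ℂ)) * hphi15

lemma bad_1 {F : Polynomial ℤ} (h : IsBad (aeval zeta15 F)) : IsBad (aeval (zeta15^1) F) := by
  apply bad_transfer 1 (by norm_num) ((1) : Polynomial ℤ) ((1) : Polynomial ℤ) (0 : Polynomial ℤ) (0 : Polynomial ℤ) ((1) : Polynomial ℤ) ?_ ?_ ?_ ?_ h
  · simp only [map_mul, map_add, map_sub, map_pow, map_one, map_zero, map_ofNat, aeval_X, map_neg, phi3z, phi5z]
    linear_combination ((0 : ℂ)) * hphi15
  · simp only [map_mul, map_add, map_sub, map_pow, map_one, map_zero, map_ofNat, aeval_X, map_neg, phi3z, phi5z]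
    linear_combination ((0 : ℂ)) * hphi15
  · simp only [map_mul, map_add, map_sub, map_pow, map_one, map_zero, map_ofNat, aeval_X, map_neg, phi3z, phi5z]
    linear_combination ((0 : ℂ)) * hphi15
  · simp only [map_mul, map_add, map_sub, map_pow, map_one, map_zero, map_ofNat, aeval_X, map_neg, phi3z, phi5z]
    linear_combination ((0 : ℂ)) * hphi15

lemma good_2 {F : Polynomial ℤ} (h : IsGood (aeval zeta15 F)) : IsGood (aeval (zeta15^2) F) := by
  apply good_transfer 2 (by norm_num) ((3 - 7*X + 8*X^2 - 6*X^3 + 3*X^4 + X^5 - 3*X^6 + 2*X^7) : Polynomial ℤ) ((-4 + X + 2*X^2 - 2*X^3 + 3*X^4 - X^5 - 2*X^6 + 3*X^7) : Polynomial ℤ) ((-2 + 2*X - 2*X^3 + 2*X^4 - X^5 - X^6 + 2*X^7) : Polynomial ℤ) ((2 + X^3 - X^4 + X^5 + X^6 - X^7) : Polynomial ℤ) ((-2 - 2*X^3 + X^4 - X^5 - 2*X^6 + X^7) : Polynomial ℤ) ?_ ?_ ?_ ?_ h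
  · simp only [map_mul, map_add, map_sub, map_pow, map_one, map_zero, map_ofNat, aeval_X, map_neg, phi3z, phi5z]
    linear_combination (((-13 + 18*zeta15 - 15*zeta15^2 + 10*zeta15^3 - 7*zeta15^5 + 6*zeta15^6) : ℂ)) * hphi15
  · simp only [map_mul, map_add, map_sub, map_pow, map_one, map_zero, map_ofNat, aeval_X, map_neg, phi3z, phi5z]
    linear_combination (((-4 + 3*zeta15 - 5*zeta15^2 + 5*zeta15^3 - 5*zeta15^4 + 6*zeta15^5 - 4*zeta15^6 + 5*zeta15^7 - zeta15^8 + 5*zeta15^9 - 2*zeta15^10 + zeta15^11 - 4*zeta15^13) : ℂ)) * hphi15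
  · simp only [map_mul, map_add, map_sub, map_pow, map_one, map_zero, map_ofNat, aeval_X, map_neg, phi3z, phi5z]
    linear_combination (((4 + 5*zeta15^2 - zeta15^3 + 2*zeta15^4 - 4*zeta15^5 + zeta15^6 - 4*zeta15^7 + zeta15^8 - 3*zeta15^9 - 2*zeta15^11 - zeta15^12 + 2*zeta15^13) : ℂ)) * hphi15
  · simp only [map_mul, map_add, map_sub, map_pow, map_one, map_zero, map_ofNat, aeval_X, map_neg, phi3z, phi5z]
    linear_combination (((-7 + zeta15 - 8*zeta15^2 + 3*zeta15^3 - 5*zeta15^4 + 6*zeta15^5 - 4*zeta15^6 + 5*zeta15^7 - zeta15^8 + 5*zeta15^9 + zeta15^10 + 3*zeta15^11 + 3*zeta15^12 - 2*zeta15^13) : ℂ)) * hphi15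

lemma bad_2 {F : Polynomial ℤ} (h : IsBad (aeval zeta15 F)) : IsBad (aeval (zeta15^2) F) := by
  apply bad_transfer 2 (by norm_num) ((X - X^3 + X^4 - X^5 + X^7) : Polynomial ℤ) ((1 + X + X^2 + X^3 + X^4 + X^5 + X^6 + X^7) : Polynomial ℤ) ((-1 + X + X^4 + X^7) : Polynomial ℤ) ((X + X^3 + X^6) : Polynomial ℤ) ((-2 + X^2 - X^3 + X^4 - X^6 + 3*X^7) : Polynomial ℤ) ?_ ?_ ?_ ?_ h
  · simp only [map_mul, map_add, map_sub, map_pow, map_one, map_zero, map_ofNat, aeval_X, map_neg, phi3z, phi5z]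
    linear_combination (((-1 + zeta15^2 + 2*zeta15^3 + 2*zeta15^4 + 2*zeta15^5 + zeta15^6) : ℂ)) * hphi15
  · simp only [map_mul, map_add, map_sub, map_pow, map_one, map_zero, map_ofNat, aeval_X, map_neg, phi3z, phi5z]
    linear_combination (((-1 - zeta15 - zeta15^2 + zeta15^4 + 3*zeta15^5 + 3*zeta15^6 + 3*zeta15^7 + zeta15^8 - zeta15^9 - 2*zeta15^10 - 2*zeta15^11 - 2*zeta15^12 - zeta15^13) : ℂ)) * hphi15
  · simp only [map_mul, map_add, map_sub, map_pow, map_one, map_zero, map_ofNat, aeval_X, map_neg, phi3z, phi5z]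
    linear_combination (((-1 + zeta15^2 + 2*zeta15^3 + 2*zeta15^4 + 2*zeta15^5 + 2*zeta15^6 - zeta15^8 - 2*zeta15^9 - 2*zeta15^10 - 2*zeta15^11 - zeta15^12) : ℂ)) * hphi15
  · simp only [map_mul, map_add, map_sub, map_pow, map_one, map_zero, map_ofNat, aeval_X, map_neg, phi3z, phi5z]
    linear_combination (((-1 - 3*zeta15 - 6*zeta15^2 - 4*zeta15^3 - 3*zeta15^4 + 3*zeta15^5 + 7*zeta15^6 + 11*zeta15^7 + 7*zeta15^8 + 3*zeta15^9 - 2*zeta15^10 - 4*zeta15^11 - 5*zeta15^12 - 3*zeta15^13) : ℂ)) * hphi15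

lemma good_4 {F : Polynomial ℤ} (h : IsGood (aeval zeta15 F)) : IsGood (aeval (zeta15^4) F) := by
  apply good_transfer 4 (by norm_num) ((1 + 2*X + 3*X^2 + 4*X^3 + 3*X^4 + 2*X^5 + X^6) : Polynomial ℤ) ((-3 + 6*X - 3*X^2 - 4*X^3 + 5*X^4 - X^5 - X^6) : Polynomial ℤ) ((3*X - 7*X^2 + 4*X^3 + 5*X^4 - 7*X^5 + 2*X^6 + X^7) : Polynomial ℤ) ((3 - 9*X + 9*X^2 + 3*X^3 - 12*X^4 + 6*X^5 + 3*X^6 - 3*X^7) : Polynomial ℤ) ((1 + 9*X - 18*X^2 + 6*X^3 + 15*X^4 - 12*X^5 - 3*X^6 + 6*X^7) : Polynomial ℤ) ?_ ?_ ?_ ?_ h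
  · simp only [map_mul, map_add, map_sub, map_pow, map_one, map_zero, map_ofNat, aeval_X, map_neg, phi3z, phi5z]
    linear_combination (((-4 - 4*zeta15 - 4*zeta15^2 - 4*zeta15^3 - zeta15^4) : ℂ)) * hphi15
  · simp only [map_mul, map_add, map_sub, map_pow, map_one, map_zero, map_ofNat, aeval_X, map_neg, phi3z, phi5z]
    linear_combination (((5*zeta15 + 10*zeta15^2 + 15*zeta15^3 + 15*zeta15^4 + 10*zeta15^5 - 10*zeta15^7 - 15*zeta15^8 - 15*zeta15^9 - 10*zeta15^10 - 5*zeta15^11) : ℂ)) * hphi15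
  · simp only [map_mul, map_add, map_sub, map_pow, map_one, map_zero, map_ofNat, aeval_X, map_neg, phi3z, phi5z]
    linear_combination (((3 - 6*zeta15^2 - 15*zeta15^3 - 21*zeta15^4 - 24*zeta15^5 - 18*zeta15^6 - 6*zeta15^7 + 6*zeta15^8 + 12*zeta15^9 + 12*zeta15^10 + 9*zeta15^11 + 3*zeta15^12) : ℂ)) * hphi15
  · simp only [map_mul, map_add, map_sub, map_pow, map_one, map_zero, map_ofNat, aeval_X, map_neg, phi3z, phi5z]
    linear_combination (((12*zeta15 + 27*zeta15^2 + 42*zeta15^3 + 45*zeta15^4 + 35*zeta15^5 + 8*zeta15^6 - 22*zeta15^7 - 42*zeta15^8 - 46*zeta15^9 - 36*zeta15^10 - 21*zeta15^11 - 5*zeta15^12 - zeta15^13 + zeta15^16 + zeta15^18 + zeta15^19 + zeta15^20) : ℂ)) * hphi15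

lemma bad_4 {F : Polynomial ℤ} (h : IsBad (aeval zeta15 F)) : IsBad (aeval (zeta15^4) F) := by
  apply bad_transfer 4 (by norm_num) ((-1 + 2*X + X^2 - 2*X^3 + X^4 - X^5 - X^6 + 2*X^7) : Polynomial ℤ) ((1 + X^2 + X^4 + X^6) : Polynomial ℤ) ((X^2 - X^3 + X^4) : Polynomial ℤ) ((-X + 2*X^2 - X^3 + X^5 - X^6 + X^7) : Polynomial ℤ) ((-1 + X - X^3 + 2*X^4 - 3*X^5 + 3*X^6 - X^7) : Polynomial ℤ) ?_ ?_ ?_ ?_ h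
  · simp only [map_mul, map_add, map_sub, map_pow, map_one, map_zero, map_ofNat, aeval_X, map_neg, phi3z, phi5z]
    linear_combination (((-2 + 2*zeta15^3 + zeta15^4 + 2*zeta15^5) : ℂ)) * hphi15
  · simp only [map_mul, map_add, map_sub, map_pow, map_one, map_zero, map_ofNat, aeval_X, map_neg, phi3z, phi5z]
    linear_combination (((-2 + 2*zeta15^3 + zeta15^4 + 3*zeta15^5 - zeta15^6 - zeta15^7 - 2*zeta15^8 - zeta15^9 - zeta15^10 + zeta15^11 + zeta15^12) : ℂ)) * hphi15
  · simp only [map_mul, map_add, map_sub, map_pow, map_one, map_zero, map_ofNat, aeval_X, map_neg, phi3z, phi5z]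
    linear_combination (((-2 + zeta15 - zeta15^2 + zeta15^3 - zeta15^4 + 2*zeta15^7 + 3*zeta15^8 + 2*zeta15^9 - 2*zeta15^11 - zeta15^12 - 2*zeta15^13) : ℂ)) * hphi15
  · simp only [map_mul, map_add, map_sub, map_pow, map_one, map_zero, map_ofNat, aeval_X, map_neg, phi3z, phi5z]
    linear_combination (((-2*zeta15 - 3*zeta15^2 - zeta15^3 - 2*zeta15^4 + 3*zeta15^5 + zeta15^6 + 5*zeta15^7 - zeta15^8 + zeta15^9 - 4*zeta15^10 - 2*zeta15^12 + zeta15^13 + zeta15^16 + zeta15^18 + zeta15^19 + zeta15^20) : ℂ)) * hphi15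

lemma good_7 {F : Polynomial ℤ} (h : IsGood (aeval zeta15 F)) : IsGood (aeval (zeta15^7) F) := by
  apply good_transfer 7 (by norm_num) ((-11 + 5*X + 6*X^2 - 5*X^3 + 10*X^4 - 2*X^5 + X^6 + 14*X^7) : Polynomial ℤ) ((-2 + X + 3*X^2 - 2*X^3 - 2*X^6 + 2*X^7) : Polynomial ℤ) ((-1 + 2*X - 2*X^3 + 2*X^4 - 2*X^6 + 2*X^7) : Polynomial ℤ) ((-2*X + 2*X^2 + X^3 - 2*X^4 + X^5 - X^7) : Polynomial ℤ) ((1 + 3*X - 3*X^2 + 3*X^4 - 3*X^5 + 3*X^7) : Polynomial ℤ) ?_ ?_ ?_ ?_ h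
  · simp only [map_mul, map_add, map_sub, map_pow, map_one, map_zero, map_ofNat, aeval_X, map_neg, phi3z, phi5z]
    linear_combination (((21 - 40*zeta15^2 - 8*zeta15^3 - 4*zeta15^4 + 2*zeta15^5 + 28*zeta15^6) : ℂ)) * hphi15
  · simp only [map_mul, map_add, map_sub, map_pow, map_one, map_zero, map_ofNat, aeval_X, map_neg, phi3z, phi5z]
    linear_combination (((-1 - 12*zeta15 - 18*zeta15^2 - 6*zeta15^3 + 6*zeta15^4 + 18*zeta15^5 + 37*zeta15^6 + 47*zeta15^7 + 34*zeta15^8 - 6*zeta15^9 - 17*zeta15^10 - 25*zeta15^11 - 29*zeta15^12 - 28*zeta15^13 - zeta15^20 - zeta15^21 - zeta15^22 + zeta15^25 + zeta15^26 + zeta15^27) : ℂ)) * hphi15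
  · simp only [map_mul, map_add, map_sub, map_pow, map_one, map_zero, map_ofNat, aeval_X, map_neg, phi3z, phi5z]
    linear_combination (((12 + 40*zeta15 + 30*zeta15^2 - 11*zeta15^3 - 46*zeta15^4 - 60*zeta15^5 - 74*zeta15^6 - 61*zeta15^7 - 15*zeta15^8 + 27*zeta15^9 + 36*zeta15^10 + 28*zeta15^11 + 29*zeta15^12 + 14*zeta15^13) : ℂ)) * hphi15
  · simp only [map_mul, map_add, map_sub, map_pow, map_one, map_zero, map_ofNat, aeval_X, map_neg, phi3z, phi5z]
    linear_combination (((-12 - 51*zeta15 - 36*zeta15^2 + 35*zeta15^4 + 76*zeta15^5 + 133*zeta15^6 + 122*zeta15^7 + 42*zeta15^8 - 35*zeta15^9 - 64*zeta15^10 - 82*zeta15^11 - 87*zeta15^12 - 43*zeta15^13 - zeta15^14 + zeta15^17 + zeta15^18 - 2*zeta15^20 - 2*zeta15^21 - zeta15^22 + zeta15^24 + 2*zeta15^25 + 2*zeta15^26 - zeta15^28 - zeta15^29 + zeta15^32 + zeta15^33 - zeta15^35 - zeta15^36 + zeta15^39 + zeta15^40 + zeta15^41) : ℂ)) * hphi1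5

lemma bad_7 {F : Polynomial ℤ} (h : IsBad (aeval zeta15 F)) : IsBad (aeval (zeta15^7) F) := by
  apply bad_transfer 7 (by norm_num) ((1 - 2*X + X^2 - X^4 + 2*X^5 - 2*X^6 + X^7) : Polynomial ℤ) ((-2 + X + X^2 - X^3 + 2*X^4 - X^5 - X^6 + 2*X^7) : Polynomial ℤ) ((-1 + X + X^4 - X^5 + X^7) : Polynomial ℤ) ((-1 + X + X^4 - X^5 + X^7) : Polynomial ℤ) ((X^2 + X^3 - X^4 - X^5 + X^6 + X^7) : Polynomial ℤ) ?_ ?_ ?_ ?_ h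
  · simp only [map_mul, map_add, map_sub, map_pow, map_one, map_zero, map_ofNat, aeval_X, map_neg, phi3z, phi5z]
    linear_combination (((-3 + 2*zeta15 - zeta15^2 + 2*zeta15^4 - 3*zeta15^5 + 2*zeta15^6) : ℂ)) * hphi15
  · simp only [map_mul, map_add, map_sub, map_pow, map_one, map_zero, map_ofNat, aeval_X, map_neg, phi3z, phi5z]
    linear_combination (((-1 - zeta15 - zeta15^2 + zeta15^3 + zeta15^10 + zeta15^11 + zeta15^12 - zeta15^13 - zeta15^20 - zeta15^21 - zeta15^22 + zeta15^25 + zeta15^26 + zeta15^27) : ℂ)) * hphi15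
  · simp only [map_mul, map_add, map_sub, map_pow, map_one, map_zero, map_ofNat, aeval_X, map_neg, phi3z, phi5z]
    linear_combination (((-1 - zeta15 - zeta15^2 + zeta15^4 + zeta15^5 - zeta15^8 + zeta15^11 + zeta15^12) : ℂ)) * hphi15
  · simp only [map_mul, map_add, map_sub, map_pow, map_one, map_zero, map_ofNat, aeval_X, map_neg, phi3z, phi5z]
    linear_combination (((-1 - zeta15 + zeta15^3 - zeta15^4 - 2*zeta15^5 - zeta15^6 + zeta15^9 + 3*zeta15^10 + 2*zeta15^11 - zeta15^12 - 2*zeta15^13 - zeta15^14 + zeta15^17 + zeta15^18 - 2*zeta15^20 - 2*zeta15^21 - zeta15^22 + zeta15^24 + 2*zeta15^25 + 2*zeta15^26 - zeta15^28 - zeta15^29 + zeta15^32 + zeta15^33 - zeta15^35 - zeta15^36 + zeta15^39 + zeta15^40 + zeta15^41) : ℂ)) * hphi15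

lemma good_8 {F : Polynomial ℤ} (h : IsGood (aeval zeta15 F)) : IsGood (aeval (zeta15^8) F) := by
  apply good_transfer 8 (by norm_num) ((1 - X^4 + X^5 + X^7) : Polynomial ℤ) ((-2 + X - 2*X^3 + 2*X^4 - X^5 - X^6 + 2*X^7) : Polynomial ℤ) ((-1 + X - X^2 - X^3 + 2*X^4 - X^5 - X^6 + X^7) : Polynomial ℤ) ((1 - X + X^2 + X^3 - 2*X^4 + X^5 + X^6 - X^7) : Polynomial ℤ) ((-1 + 2*X - X^2 - 3*X^3 + 3*X^4 - 2*X^6 + X^7) : Polynomial ℤ) ?_ ?_ ?_ ?_ h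
  · simp only [map_mul, map_add, map_sub, map_pow, map_one, map_zero, map_ofNat, aeval_X, map_neg, phi3z, phi5z]
    linear_combination (((-3 - 2*zeta15 - 2*zeta15^2 - zeta15^3 + 2*zeta15^4 + zeta15^5 + 2*zeta15^6) : ℂ)) * hphi15
  · simp only [map_mul, map_add, map_sub, map_pow, map_one, map_zero, map_ofNat, aeval_X, map_neg, phi3z, phi5z]
    linear_combination (((-1 - zeta15 - 2*zeta15^2 - 2*zeta15^3 - 2*zeta15^4 + 2*zeta15^6 + 3*zeta15^7 + 3*zeta15^8 + 2*zeta15^9 - 2*zeta15^11 - 2*zeta15^12 - zeta15^13 + zeta15^15 + zeta15^16 + zeta15^17 - zeta15^25 - zeta15^26 - zeta15^27 + zeta15^30 + zeta15^31 + zeta15^32) : ℂ)) * hphi15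
  · simp only [map_mul, map_add, map_sub, map_pow, map_one, map_zero, map_ofNat, aeval_X, map_neg, phi3z, phi5z]
    linear_combination (((1 + zeta15^4 - zeta15^6 - 2*zeta15^7 - 2*zeta15^8 - 2*zeta15^9 - zeta15^10 + zeta15^11 + zeta15^12 + zeta15^13) : ℂ)) * hphi15
  · simp only [map_mul, map_add, map_sub, map_pow, map_one, map_zero, map_ofNat, aeval_X, map_neg, phi3z, phi5z]
    linear_combination (((-2 - zeta15 - zeta15^2 - zeta15^3 - 2*zeta15^4 - zeta15^5 + zeta15^6 + zeta15^7 + 2*zeta15^8 + 2*zeta15^9 + 2*zeta15^10 - 2*zeta15^11 - 2*zeta15^12 - 2*zeta15^13 + zeta15^15 + 2*zeta15^16 + 2*zeta15^17 - zeta15^19 - zeta15^20 + zeta15^23 + zeta15^24 - 2*zeta15^26 - 2*zeta15^27 - zeta15^28 + zeta15^30 + 2*zeta15^31 + 2*zeta15^32 - zeta15^34 - zeta15^35 + zeta15^38 + zeta15^39 + zeta15^40 - zeta15^41 - zeta15^42 - zeta15^43 + zeta15^46 + zeta15^47 + zeta15^48) : ℂ)) * hphi15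

lemma bad_8 {F : Polynomial ℤ} (h : IsBad (aeval zeta15 F)) : IsBad (aeval (zeta15^8) F) := by
  apply bad_transfer 8 (by norm_num) ((-2 + X + 2*X^2 - X^3 + X^4 - 2*X^5 - 2*X^6 + 2*X^7) : Polynomial ℤ) ((1 + X^4) : Polynomial ℤ) ((X^4 - X^6 + X^7) : Polynomial ℤ) ((X^3 - X^5 + X^6) : Polynomial ℤ) ((X - X^2 - X^3 + 3*X^4 - X^5 - X^6 + X^7) : Polynomial ℤ) ?_ ?_ ?_ ?_ h
  · simp only [map_mul, map_add, map_sub, map_pow, map_one, map_zero, map_ofNat, aeval_X, map_neg, phi3z, phi5z]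
    linear_combination (((-3 - 2*zeta15 + 2*zeta15^3) : ℂ)) * hphi15
  · simp only [map_mul, map_add, map_sub, map_pow, map_one, map_zero, map_ofNat, aeval_X, map_neg, phi3z, phi5z]
    linear_combination (((-3 - 2*zeta15 + 2*zeta15^3 + 2*zeta15^10 + zeta15^11 - zeta15^12 - 2*zeta15^13 + zeta15^15 + zeta15^16 + zeta15^17 - zeta15^25 - zeta15^26 - zeta15^27 + zeta15^30 + zeta15^31 + zeta15^32) : ℂ)) * hphi15
  · simp only [map_mul, map_add, map_sub, map_pow, map_one, map_zero, map_ofNat, aeval_X, map_neg, phi3z, phi5z]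
    linear_combination (((-3 - 2*zeta15 + 2*zeta15^3 + 2*zeta15^9 + zeta15^10 - zeta15^11 - 2*zeta15^12 + zeta15^14 + zeta15^15 + zeta15^16) : ℂ)) * hphi15
  · simp only [map_mul, map_add, map_sub, map_pow, map_one, map_zero, map_ofNat, aeval_X, map_neg, phi3z, phi5z]
    linear_combination (((-1 - 3*zeta15 - 2*zeta15^2 + 3*zeta15^3 + zeta15^4 - zeta15^5 - zeta15^6 + 2*zeta15^7 - zeta15^8 - zeta15^9 + zeta15^10 + 2*zeta15^11 - 2*zeta15^12 - 3*zeta15^13 + zeta15^15 + 2*zeta15^16 + 2*zeta15^17 - zeta15^19 - zeta15^20 + zeta15^23 + zeta15^24 - 2*zeta15^26 - 2*zeta15^27 - zeta15^28 + zeta15^30 + 2*zeta15^31 + 2*zeta15^32 - zeta15^34 - zeta15^35 + zeta15^38 + zeta15^39 + zeta15^40 - zeta15^41 - zeta15^42 - zeta15^43 + zeta15^46 + zeta15^47 + zeta15^48) : ℂ)) * hphi15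

lemma good_11 {F : Polynomial ℤ} (h : IsGood (aeval zeta15 F)) : IsGood (aeval (zeta15^11) F) := by
  apply good_transfer 11 (by norm_num) ((1 - 2*X + X^2 + X^3 - 2*X^4 + X^5) : Polynomial ℤ) ((-2 + 2*X + 2*X^2 - X^3 + 2*X^4 - X^5 + 3*X^7) : Polynomial ℤ) ((-1 + X - X^3 + X^4 + X^7) : Polynomial ℤ) (0 : Polynomial ℤ) ((1 + X^5) : Polynomial ℤ) ?_ ?_ ?_ ?_ h
  · simp only [map_mul, map_add, map_sub, map_pow, map_one, map_zero, map_ofNat, aeval_X, map_neg, phi3z, phi5z]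
    linear_combination (((-3 + 3*zeta15 - zeta15^2 - 3*zeta15^3 + 3*zeta15^4) : ℂ)) * hphi15
  · simp only [map_mul, map_add, map_sub, map_pow, map_one, map_zero, map_ofNat, aeval_X, map_neg, phi3z, phi5z]
    linear_combination (((-1 - zeta15 - zeta15^2 + zeta15^5 + 2*zeta15^6 + zeta15^7 - zeta15^10 - 2*zeta15^11 - zeta15^12 + zeta15^15 + zeta15^16 + zeta15^17 - zeta15^25 - zeta15^26 - zeta15^27 + zeta15^30 + zeta15^31 + zeta15^32 - zeta15^40 - zeta15^41 - zeta15^42 + zeta15^45 + zeta15^46 + zeta15^47) : ℂ)) * hphi15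
  · simp only [map_mul, map_add, map_sub, map_pow, map_one, map_zero, map_ofNat, aeval_X, map_neg, phi3z, phi5z]
    linear_combination (((zeta15 + zeta15^2 + zeta15^3 - zeta15^7 - zeta15^8 - zeta15^9 + zeta15^12 + zeta15^13 + zeta15^14) : ℂ)) * hphi15
  · simp only [map_mul, map_add, map_sub, map_pow, map_one, map_zero, map_ofNat, aeval_X, map_neg, phi3z, phi5z]
    linear_combination (((-zeta15 - zeta15^2 - zeta15^3 + zeta15^7 + zeta15^8 + zeta15^9 - zeta15^10 - zeta15^12 - zeta15^14 + zeta15^15 + zeta15^16 - zeta15^18 - zeta15^19 - zeta15^21 + zeta15^24 - zeta15^25 + zeta15^28 + zeta15^30 + zeta15^31 - zeta15^33 - zeta15^34 - zeta15^36 + zeta15^39 - zeta15^40 + zeta15^43 + zeta15^45 + zeta15^46 - zeta15^48 - zeta15^49 - zeta15^51 + zeta15^54 + zeta15^56 + zeta15^57 + zeta15^58 - zeta15^62 - zeta15^63 - zeta15^64 + zeta15^67 + zeta15^68 + zeta15^69) : ℂ)) * hphi15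

lemma bad_11 {F : Polynomial ℤ} (h : IsBad (aeval zeta15 F)) : IsBad (aeval (zeta15^11) F) := by
  apply bad_transfer 11 (by norm_num) ((1 - 2*X + X^2 + X^3 - 2*X^4 + X^5) : Polynomial ℤ) ((-2 + 2*X + 2*X^2 - X^3 + 2*X^4 - X^5 + 3*X^7) : Polynomial ℤ) ((-1 + X - X^3 + X^4 + X^7) : Polynomial ℤ) ((X + X^6) : Polynomial ℤ) ((1 + X^5) : Polynomial ℤ) ?_ ?_ ?_ ?_ h
  · simp only [map_mul, map_add, map_sub, map_pow, map_one, map_zero, map_ofNat, aeval_X, map_neg, phi3z, phi5z]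
    linear_combination (((-3 + 3*zeta15 - zeta15^2 - 3*zeta15^3 + 3*zeta15^4) : ℂ)) * hphi15
  · simp only [map_mul, map_add, map_sub, map_pow, map_one, map_zero, map_ofNat, aeval_X, map_neg, phi3z, phi5z]
    linear_combination (((-1 - zeta15 - zeta15^2 + zeta15^5 + 2*zeta15^6 + zeta15^7 - zeta15^10 - 2*zeta15^11 - zeta15^12 + zeta15^15 + zeta15^16 + zeta15^17 - zeta15^25 - zeta15^26 - zeta15^27 + zeta15^30 + zeta15^31 + zeta15^32 - zeta15^40 - zeta15^41 - zeta15^42 + zeta15^45 + zeta15^46 + zeta15^47) : ℂ)) * hphi15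
  · simp only [map_mul, map_add, map_sub, map_pow, map_one, map_zero, map_ofNat, aeval_X, map_neg, phi3z, phi5z]
    linear_combination (((-zeta15 - zeta15^2 - zeta15^3 + zeta15^7 + zeta15^8 + zeta15^9 - zeta15^18 - zeta15^19 - zeta15^20 + zeta15^23 + zeta15^24 + zeta15^25) : ℂ)) * hphi15
  · simp only [map_mul, map_add, map_sub, map_pow, map_one, map_zero, map_ofNat, aeval_X, map_neg, phi3z, phi5z]
    linear_combination (((-zeta15 - zeta15^2 - zeta15^3 + zeta15^7 + zeta15^8 + zeta15^9 - zeta15^10 - zeta15^12 - zeta15^14 + zeta15^15 + zeta15^16 - zeta15^18 - zeta15^19 - zeta15^21 + zeta15^24 - zeta15^25 + zeta15^28 + zeta15^30 + zeta15^31 - zeta15^33 - zeta15^34 - zeta15^36 + zeta15^39 - zeta15^40 + zeta15^43 + zeta15^45 + zeta15^46 - zeta15^48 - zeta15^49 - zeta15^51 + zeta15^54 + zeta15^56 + zeta15^57 + zeta15^58 - zeta15^62 - zeta15^63 - zeta15^64 + zeta15^67 + zeta15^68 + zeta15^69) : ℂ)) * hphi15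

lemma good_13 {F : Polynomial ℤ} (h : IsGood (aeval zeta15 F)) : IsGood (aeval (zeta15^13) F) := by
  apply good_transfer 13 (by norm_num) ((1 - 2*X - 2*X^2 - X^4 + X^5 - X^6 - 3*X^7) : Polynomial ℤ) ((-1 + 3*X - 5*X^2 + 6*X^3 - 5*X^4 + 3*X^5 - X^6) : Polynomial ℤ) ((-3 + 6*X - 7*X^2 + 6*X^3 - 4*X^4 + X^5 + X^6 - X^7) : Polynomial ℤ) ((9 - 17*X + 17*X^2 - 8*X^3 - 2*X^4 + 13*X^5 - 15*X^6 + 8*X^7) : Polynomial ℤ) ((-11 + 24*X - 27*X^2 + 18*X^3 - 6*X^4 - 9*X^5 + 15*X^6 - 9*X^7) : Polynomial ℤ) ?_ ?_ ?_ ?_ h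
  · simp only [map_mul, map_add, map_sub, map_pow, map_one, map_zero, map_ofNat, aeval_X, map_neg, phi3z, phi5z]
    linear_combination (((-2 + 3*zeta15 - 6*zeta15^2 + 6*zeta15^3 - 5*zeta15^4 + 3*zeta15^5) : ℂ)) * hphi15
  · simp only [map_mul, map_add, map_sub, map_pow, map_one, map_zero, map_ofNat, aeval_X, map_neg, phi3z, phi5z]
    linear_combination (((-3 + 4*zeta15 - 2*zeta15^2 + 8*zeta15^3 - 4*zeta15^4 + 5*zeta15^5 - 5*zeta15^6 + 5*zeta15^7 - 5*zeta15^8 + 4*zeta15^9 - 2*zeta15^10 + zeta15^11 - 3*zeta15^12 - 3*zeta15^13 - zeta15^20 - zeta15^21 - zeta15^22 + zeta15^25 + zeta15^26 + zeta15^27 - zeta15^35 - zeta15^36 - zeta15^37 + zeta15^40 + zeta15^41 + zeta15^42 - zeta15^50 - zeta15^51 - zeta15^52 + zeta15^55 + zeta15^56 + zeta15^57) : ℂ)) * hphi15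
  · simp only [map_mul, map_add, map_sub, map_pow, map_one, map_zero, map_ofNat, aeval_X, map_neg, phi3z, phi5z]
    linear_combination (((9 - 16*zeta15 - 6*zeta15^2 - 21*zeta15^3 + 3*zeta15^4 - 3*zeta15^5 + 5*zeta15^6 - 2*zeta15^7 + 3*zeta15^8 + 4*zeta15^9 - zeta15^10 + 13*zeta15^11 + 10*zeta15^12 + 23*zeta15^13 + zeta15^16 + zeta15^17 + zeta15^18) : ℂ)) * hphi15
  · simp only [map_mul, map_add, map_sub, map_pow, map_one, map_zero, map_ofNat, aeval_X, map_neg, phi3z, phi5z]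
    linear_combination (((-12 + 23*zeta15 + 5*zeta15^2 + 34*zeta15^3 - 7*zeta15^4 + 13*zeta15^5 - 12*zeta15^6 + 12*zeta15^7 - 7*zeta15^8 + 7*zeta15^9 - zeta15^10 - 10*zeta15^11 - 16*zeta15^12 - 26*zeta15^13 - 2*zeta15^16 - 2*zeta15^17 - 3*zeta15^18 - zeta15^19 - 2*zeta15^20 + 2*zeta15^23 + zeta15^24 + 2*zeta15^25 + zeta15^26 + zeta15^27 - zeta15^31 - zeta15^32 - 2*zeta15^33 - zeta15^34 - 2*zeta15^35 + 2*zeta15^38 + zeta15^39 + 2*zeta15^40 + zeta15^41 + zeta15^42 - zeta15^46 - zeta15^47 - 2*zeta15^48 - zeta15^49 - 2*zeta15^50 + 2*zeta15^53 + zeta15^54 + 2*zeta15^55 + zeta15^56 + zeta15^57 - zeta15^61 - zeta15^62 - 2*zeta15^63 - zeta15^64 - zeta15^65 + zeta15^66 + zeta15^67 + 2*zeta15^68 + zeta15^69 + zeta15^70 - zeta15^76 - zeta15^77 - zeta15^78 + zeta15^81 + zeta15^82 + zeta15^83) : ℂ)) * hphi15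

lemma bad_13 {F : Polynomial ℤ} (h : IsBad (aeval zeta15 F)) : IsBad (aeval (zeta15^13) F) := by
  apply bad_transfer 13 (by norm_num) ((-X^2 - X^4) : Polynomial ℤ) ((-1 + 2*X - 2*X^3 + 2*X^4 - X^6 + X^7) : Polynomial ℤ) ((X - 2*X^2 + X^3 + 2*X^4 - 2*X^5 + X^7) : Polynomial ℤ) ((X - 2*X^2 + X^3 + 2*X^4 - 2*X^5 + X^7) : Polynomial ℤ) ((1 - 2*X^2 + 2*X^3 + X^4 - 2*X^5 + X^6) : Polynomial ℤ) ?_ ?_ ?_ ?_ h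
  · simp only [map_mul, map_add, map_sub, map_pow, map_one, map_zero, map_ofNat, aeval_X, map_neg, phi3z, phi5z]
    linear_combination (((-1 - zeta15 - zeta15^3) : ℂ)) * hphi15
  · simp only [map_mul, map_add, map_sub, map_pow, map_one, map_zero, map_ofNat, aeval_X, map_neg, phi3z, phi5z]
    linear_combination (((-1 - zeta15 - 2*zeta15^2 - 2*zeta15^3 - 2*zeta15^4 - zeta15^5 + zeta15^7 + 2*zeta15^8 + 2*zeta15^9 + 2*zeta15^10 + zeta15^11 + zeta15^12 - zeta15^20 - zeta15^21 - zeta15^22 + zeta15^25 + zeta15^26 + zeta15^27 - zeta15^35 - zeta15^36 - zeta15^37 + zeta15^40 + zeta15^41 + zeta15^42 - zeta15^50 - zeta15^51 - zeta15^52 + zeta15^55 + zeta15^56 + zeta15^57) : ℂ)) * hphi15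
  · simp only [map_mul, map_add, map_sub, map_pow, map_one, map_zero, map_ofNat, aeval_X, map_neg, phi3z, phi5z]
    linear_combination (((-1 - zeta15 - 2*zeta15^2 - 2*zeta15^3 - 2*zeta15^4 + zeta15^6 + 2*zeta15^7 + 2*zeta15^8 + zeta15^9 - zeta15^11 + zeta15^14 + zeta15^15 + zeta15^16 - zeta15^24 - zeta15^25 - zeta15^26 + zeta15^29 + zeta15^30 + zeta15^31) : ℂ)) * hphi15
  · simp only [map_mul, map_add, map_sub, map_pow, map_one, map_zero, map_ofNat, aeval_X, map_neg, phi3z, phi5z]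
    linear_combination (((-1 - zeta15 - 2*zeta15^2 - 2*zeta15^3 - 2*zeta15^4 - zeta15^5 + zeta15^7 + 2*zeta15^8 + 2*zeta15^9 + 2*zeta15^10 + 2*zeta15^11 + 2*zeta15^12 + zeta15^13 - 2*zeta15^16 - 2*zeta15^17 - 3*zeta15^18 - zeta15^19 - 2*zeta15^20 + 2*zeta15^23 + zeta15^24 + 2*zeta15^25 + zeta15^26 + zeta15^27 - zeta15^31 - zeta15^32 - 2*zeta15^33 - zeta15^34 - 2*zeta15^35 + 2*zeta15^38 + zeta15^39 + 2*zeta15^40 + zeta15^41 + zeta15^42 - zeta15^46 - zeta15^47 - 2*zeta15^48 - zeta15^49 - 2*zeta15^50 + 2*zeta15^53 + zeta15^54 + 2*zeta15^55 + zeta15^56 + zeta15^57 - zeta15^61 - zeta15^62 - 2*zeta15^63 - zeta15^64 - zeta15^65 + zeta15^66 + zeta15^67 + 2*zeta15^68 + zeta15^69 + zeta15^70 - zeta15^76 - zeta15^77 - zeta15^78 + zeta15^81 + zeta15^82 + zeta15^83) : ℂ)) * hphi15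

lemma good_14 {F : Polynomial ℤ} (h : IsGood (aeval zeta15 F)) : IsGood (aeval (zeta15^14) F) := by
  apply good_transfer 14 (by norm_num) ((2 - X - 2*X^2 + X^3 + X^5 + X^6 - X^7) : Polynomial ℤ) ((-1 - X + X^2 - 2*X^3 + X^4 - X^5 - X^6 + X^7) : Polynomial ℤ) ((-X + X^2 - X^3 + X^5 - 2*X^6 + X^7) : Polynomial ℤ) ((1 + X - X^2 + X^3 + X^6 - X^7) : Polynomial ℤ) ((-2*X + X^2 - X^3 - X^4 + X^5 - 2*X^6 + X^7) : Polynomial ℤ) ?_ ?_ ?_ ?_ h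
  · simp only [map_mul, map_add, map_sub, map_pow, map_one, map_zero, map_ofNat, aeval_X, map_neg, phi3z, phi5z]
    linear_combination (((-3 - 4*zeta15 + zeta15^2 + 2*zeta15^4 + zeta15^5 - zeta15^6) : ℂ)) * hphi15
  · simp only [map_mul, map_add, map_sub, map_pow, map_one, map_zero, map_ofNat, aeval_X, map_neg, phi3z, phi5z]
    linear_combination (((1 - 2*zeta15 - 3*zeta15^2 - 3*zeta15^3 + zeta15^5 + 3*zeta15^6 + 4*zeta15^7 + 2*zeta15^8 - 3*zeta15^10 - 2*zeta15^11 - 2*zeta15^12 + zeta15^13 + zeta15^15 + zeta15^16 + zeta15^17 - zeta15^25 - zeta15^26 - zeta15^27 + zeta15^30 + zeta15^31 + zeta15^32 - zeta15^40 - zeta15^41 - zeta15^42 + zeta15^45 + zeta15^46 + zeta15^47 - zeta15^55 - zeta15^56 - zeta15^57 + zeta15^60 + zeta15^61 + zeta15^62) : ℂ)) * hphi15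
  · simp only [map_mul, map_add, map_sub, map_pow, map_one, map_zero, map_ofNat, aeval_X, map_neg, phi3z, phi5z]
    linear_combination (((1 + 3*zeta15 + 2*zeta15^2 + zeta15^3 - zeta15^4 - 3*zeta15^5 - 5*zeta15^6 - 4*zeta15^7 + 3*zeta15^9 + 3*zeta15^10 + zeta15^11 - 2*zeta15^13 - zeta15^14 - zeta15^15 + zeta15^18 + zeta15^19 + zeta15^20) : ℂ)) * hphi15
  · simp only [map_mul, map_add, map_sub, map_pow, map_one, map_zero, map_ofNat, aeval_X, map_neg, phi3z, phi5z]
    linear_combination (((-1 - 5*zeta15 - 5*zeta15^2 - 3*zeta15^3 + zeta15^4 + 4*zeta15^5 + 6*zeta15^6 + 6*zeta15^7 + zeta15^8 - 3*zeta15^9 - 6*zeta15^10 - 3*zeta15^11 - 2*zeta15^12 + 3*zeta15^13 + 3*zeta15^14 + 4*zeta15^15 + 2*zeta15^16 + zeta15^17 - zeta15^18 - zeta15^19 - zeta15^20 - zeta15^23 - 2*zeta15^24 - 3*zeta15^25 - 2*zeta15^26 - zeta15^27 + zeta15^28 + 2*zeta15^29 + 3*zeta15^30 + 2*zeta15^31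 + zeta15^32 - zeta15^38 - 2*zeta15^39 - 3*zeta15^40 - 2*zeta15^41 - zeta15^42 + zeta15^43 + 2*zeta15^44 + 3*zeta15^45 + 2*zeta15^46 + zeta15^47 - zeta15^53 - 2*zeta15^54 - 3*zeta15^55 - 2*zeta15^56 - zeta15^57 + zeta15^58 + 2*zeta15^59 + 3*zeta15^60 + 2*zeta15^61 + zeta15^62 - zeta15^68 - 2*zeta15^69 - 2*zeta15^70 - zeta15^71 + zeta15^73 + 2*zeta15^74 + 2*zeta15^75 + zeta15^76 - zeta15^83 - zeta15^84 - zeta15^85 + zeta15^88 + zeta15^89 + zeta15^90) : ℂ)) * hphi15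

lemma bad_14 {F : Polynomial ℤ} (h : IsBad (aeval zeta15 F)) : IsBad (aeval (zeta15^14) F) := by
  apply bad_transfer 14 (by norm_num) ((-X^7) : Polynomial ℤ) ((1 - X + X^3 - X^4 + X^5 - X^7) : Polynomial ℤ) ((-1 + X) : Polynomial ℤ) ((-1 + X) : Polynomial ℤ) ((X) : Polynomial ℤ) ?_ ?_ ?_ ?_ h
  · simp only [map_mul, map_add, map_sub, map_pow, map_one, map_zero, map_ofNat, aeval_X, map_neg, phi3z, phi5z]
    linear_combination (((-1 - zeta15 - zeta15^2 + zeta15^5 + zeta15^6) : ℂ)) * hphi15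
  · simp only [map_mul, map_add, map_sub, map_pow, map_one, map_zero, map_ofNat, aeval_X, map_neg, phi3z, phi5z]
    linear_combination (((-1 - zeta15 - zeta15^2 + zeta15^5 + zeta15^6 + zeta15^7 - zeta15^10 - zeta15^11 - zeta15^12 + zeta15^15 + zeta15^16 + zeta15^17 - zeta15^25 - zeta15^26 - zeta15^27 + zeta15^30 + zeta15^31 + zeta15^32 - zeta15^40 - zeta15^41 - zeta15^42 + zeta15^45 + zeta15^46 + zeta15^47 - zeta15^55 - zeta15^56 - zeta15^57 + zeta15^60 + zeta15^61 + zeta15^62) : ℂ)) * hphi15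
  · simp only [map_mul, map_add, map_sub, map_pow, map_one, map_zero, map_ofNat, aeval_X, map_neg, phi3z, phi5z]
    linear_combination (((-1 - zeta15 - zeta15^2 + zeta15^5 + zeta15^6 + zeta15^7 - zeta15^12 - zeta15^13 - zeta15^14 + zeta15^17 + zeta15^18 + zeta15^19 - zeta15^27 - zeta15^28 - zeta15^29 + zeta15^32 + zeta15^33 + zeta15^34) : ℂ)) * hphi15
  · simp only [map_mul, map_add, map_sub, map_pow, map_one, map_zero, map_ofNat, aeval_X, map_neg, phi3z, phi5z]
    linear_combination (((-1 - zeta15 - zeta15^2 + zeta15^5 + zeta15^6 + zeta15^7 - zeta15^8 - 2*zeta15^9 - 3*zeta15^10 - 2*zeta15^11 - zeta15^12 + 2*zeta15^13 + 3*zeta15^14 + 4*zeta15^15 + 2*zeta15^16 + zeta15^17 - zeta15^18 - zeta15^19 - zeta15^20 - zeta15^23 - 2*zeta15^24 - 3*zeta15^25 - 2*zeta15^26 - zeta15^27 + zeta15^28 + 2*zeta15^29 + 3*zeta15^30 + 2*zeta15^31 + zeta15^32 - zeta15^38 - 2*zeta15^39 - 3*zeta15^40 - 2*zeta15^41 - zeta15^42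 + zeta15^43 + 2*zeta15^44 + 3*zeta15^45 + 2*zeta15^46 + zeta15^47 - zeta15^53 - 2*zeta15^54 - 3*zeta15^55 - 2*zeta15^56 - zeta15^57 + zeta15^58 + 2*zeta15^59 + 3*zeta15^60 + 2*zeta15^61 + zeta15^62 - zeta15^68 - 2*zeta15^69 - 2*zeta15^70 - zeta15^71 + zeta15^73 + 2*zeta15^74 + 2*zeta15^75 + zeta15^76 - zeta15^83 - zeta15^84 - zeta15^85 + zeta15^88 + zeta15^89 + zeta15^90) : ℂ)) * hphi15

theorem stmt10 (F : Polynomial ℤ) (k : ℤ) (hk : Int.gcd k 15 = 1) :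
    (IsGood (Polynomial.aeval zeta15 F) → IsGood (Polynomial.aeval (zeta15 ^ k) F)) ∧
    (IsBad (Polynomial.aeval zeta15 F) → IsBad (Polynomial.aeval (zeta15 ^ k) F)) := by
  have hnz : zeta15 ≠ 0 := Complex.exp_ne_zero _
  have hred : ∃ m : ℕ, m < 15 ∧ Nat.Coprime m 15 ∧ zeta15 ^ k = zeta15 ^ m := by
    refine ⟨(k % 15).toNat, ?_, ?_, ?_⟩
    · have := Int.emod_lt_of_pos k (by norm_num : (0:ℤ) < 15)
      omega
    · have hnn : 0 ≤ k % 15 := Int.emod_nonneg k (by norm_num)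
      have hcast : (((k % 15).toNat : ℤ)) = k % 15 := Int.toNat_of_nonneg hnn
      have h1 : IsCoprime (k:ℤ) 15 := Int.isCoprime_iff_gcd_eq_one.mpr hk
      have h2 : IsCoprime (((k % 15).toNat : ℤ)) 15 := by
        have he : (((k % 15).toNat : ℤ)) = k + 15 * (-(k / 15)) := by
          rw [hcast, Int.emod_def]; ring
        rw [he]
        exact h1.add_mul_left_left _
      have h3 := Int.isCoprime_iff_gcd_eq_one.mp h2
      rwa [show ((15:ℤ)) = ((15:ℕ):ℤ) by norm_num, Int.gcd_natCast_natCast] at h3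
    · have hnn : 0 ≤ k % 15 := Int.emod_nonneg k (by norm_num)
      have hcast : (((k % 15).toNat : ℤ)) = k % 15 := Int.toNat_of_nonneg hnn
      conv_lhs => rw [← Int.mul_ediv_add_emod k 15]
      rw [zpow_add₀ hnz, zpow_mul, zpow_ofNat, zeta15_pow15, one_zpow, one_mul]
      conv_lhs => rw [← hcast]
      rw [zpow_natCast]
  obtain ⟨m, hmlt, hm, hzk⟩ := hred
  rw [hzk]
  constructor
  · intro h
    interval_cases m <;>
      first
        | with_reducible exact good_1 h | with_reducible exact good_2 h | with_reducible exact good_4 h | with_reducible exact good_7 h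
        | with_reducible exact good_8 h | with_reducible exact good_11 h | with_reducible exact good_13 h | with_reducible exact good_14 h
        | exact absurd hm (by decide)
  · intro h
    interval_cases m <;>
      first
        | with_reducible exact bad_1 h | with_reducible exact bad_2 h | with_reducible exact bad_4 h | with_reducible exact bad_7 h
        | with_reducible exact bad_8 h | with_reducible exact bad_11 h | with_reducible exact bad_13 h | with_reducible exact bad_14 h
        | exact absurd hm (by decide)
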